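/- For every d : Fin 3 → ℝ there exist signed permutation matrices Π₁, Π₂, each with determinant 1, and e : Fin 3 → ℝ such that Π₁ · diag(d) · (Π₂)ᵀ = diag(e) and e 0 ≤ −|e 1|. Consequently, every two-qubit Hamiltonian with diagonal β-matrix and S = P = 0 is stoquastic, with a symmetric-Z-matrix form reachable by single-qubit Clifford rotations. -/

import Mathlib

open Matrix

/-- `M` is a signed permutation matrix: exactly one nonzero entry, equal to `±1`,
in each row and column. -/
def IsSignedPerm (M : Matrix (Fin 3) (Fin 3) ℝ) : Prop :=
  ∃ (p : Equiv.Perm (Fin 3)) (s : Fin 3 → ℝ),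
    (∀ j, s j = 1 ∨ s j = -1) ∧ M = Matrix.of fun i j => if i = p j then s j else 0

def cycA : Equiv.Perm (Fin 3) := ⟨![2,0,1], ![1,2,0], by decide, by decide⟩
def cycB : Equiv.Perm (Fin 3) := ⟨![1,2,0], ![2,0,1], by decide, by decide⟩

theorem diagonal_beta_always_stoquastic_by_cliffords (d : Fin 3 → ℝ) :
    ∃ (P₁ P₂ : Matrix (Fin 3) (Fin 3) ℝ) (e : Fin 3 → ℝ),
      IsSignedPerm P₁ ∧ IsSignedPerm P₂ ∧ P₁.det = 1 ∧ P₂.det = 1 ∧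
      P₁ * Matrix.diagonal d * P₂ᵀ = Matrix.diagonal e ∧ e 0 ≤ -|e 1| := by
  by_cases h0 : |d 1| ≤ |d 0| ∧ |d 2| ≤ |d 0|
  · obtain ⟨hA, hB⟩ := h0
    by_cases hd : 0 ≤ d 0
    · refine ⟨!![(-1:ℝ),0,0;0,1,0;0,0,-1], !![1,0,0;0,1,0;0,0,1], ![-(d 0), d 1, -(d 2)],
        ⟨Equiv.refl _, ![-1,1,-1], by intro j; fin_cases j <;> norm_num,
          by ext i j; fin_cases i <;> fin_cases j <;> simp [Matrix.vecHead, Matrix.vecTail]⟩,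
        ⟨Equiv.refl _, ![1,1,1], by intro j; fin_cases j <;> norm_num,
          by ext i j; fin_cases i <;> fin_cases j <;> simp [Matrix.vecHead, Matrix.vecTail]⟩,
        by simp [Matrix.det_fin_three],
        by simp [Matrix.det_fin_three],
        by ext i j; fin_cases i <;> fin_cases j <;>
          simp [Matrix.mul_apply, Matrix.vecMul, dotProduct, Fin.sum_univ_three,
            Matrix.diagonal_apply, Matrix.transpose_apply, Matrix.vecHead, Matrix.vecTail],
        ?_⟩
      have := abs_of_nonneg hd
      simp only [Matrix.cons_val_zero, Matrix.cons_val_one, Matrix.head_cons]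
      linarith
    · refine ⟨!![(1:ℝ),0,0;0,1,0;0,0,1], !![1,0,0;0,1,0;0,0,1], ![d 0, d 1, d 2],
        ⟨Equiv.refl _, ![1,1,1], by intro j; fin_cases j <;> norm_num,
          by ext i j; fin_cases i <;> fin_cases j <;> simp [Matrix.vecHead, Matrix.vecTail]⟩,
        ⟨Equiv.refl _, ![1,1,1], by intro j; fin_cases j <;> norm_num,
          by ext i j; fin_cases i <;> fin_cases j <;> simp [Matrix.vecHead, Matrix.vecTail]⟩,
        by simp [Matrix.det_fin_three],
        by simp [Matrix.det_fin_three],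
        by ext i j; fin_cases i <;> fin_cases j <;>
          simp [Matrix.mul_apply, Matrix.vecMul, dotProduct, Fin.sum_univ_three,
            Matrix.diagonal_apply, Matrix.transpose_apply, Matrix.vecHead, Matrix.vecTail],
        ?_⟩
      have := abs_of_neg (lt_of_not_ge hd)
      simp only [Matrix.cons_val_zero, Matrix.cons_val_one, Matrix.head_cons]
      linarith
  · by_cases h1 : |d 0| ≤ |d 1| ∧ |d 2| ≤ |d 1|
    · obtain ⟨hA, hB⟩ := h1
      by_cases hd : 0 ≤ d 1
      · refine ⟨!![(0:ℝ),-1,0;0,0,-1;1,0,0], !![0,1,0;0,0,1;1,0,0], ![-(d 1), -(d 2), d 0],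
          ⟨cycA, ![1,-1,-1], by intro j; fin_cases j <;> norm_num,
            by ext i j; fin_cases i <;> fin_cases j <;>
              simp [cycA, Matrix.vecHead, Matrix.vecTail]⟩,
          ⟨cycA, ![1,1,1], by intro j; fin_cases j <;> norm_num,
            by ext i j; fin_cases i <;> fin_cases j <;>
              simp [cycA, Matrix.vecHead, Matrix.vecTail]⟩,
          by simp [Matrix.det_fin_three],
          by simp [Matrix.det_fin_three],
          by ext i j; fin_cases i <;> fin_cases j <;>
            simp [Matrix.mul_apply, Matrix.vecMul, dotProduct, Fin.sum_univ_three,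
              Matrix.diagonal_apply, Matrix.transpose_apply, Matrix.vecHead, Matrix.vecTail],
          ?_⟩
        have := abs_of_nonneg hd
        simp only [Matrix.cons_val_zero, Matrix.cons_val_one, Matrix.head_cons]
        rw [abs_neg]
        linarith
      · refine ⟨!![(0:ℝ),1,0;0,0,1;1,0,0], !![0,1,0;0,0,1;1,0,0], ![d 1, d 2, d 0],
          ⟨cycA, ![1,1,1], by intro j; fin_cases j <;> norm_num,
            by ext i j; fin_cases i <;> fin_cases j <;>
              simp [cycA, Matrix.vecHead, Matrix.vecTail]⟩,
          ⟨cycA, ![1,1,1], by intro j; fin_cases j <;> norm_num,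
            by ext i j; fin_cases i <;> fin_cases j <;>
              simp [cycA, Matrix.vecHead, Matrix.vecTail]⟩,
          by simp [Matrix.det_fin_three],
          by simp [Matrix.det_fin_three],
          by ext i j; fin_cases i <;> fin_cases j <;>
            simp [Matrix.mul_apply, Matrix.vecMul, dotProduct, Fin.sum_univ_three,
              Matrix.diagonal_apply, Matrix.transpose_apply, Matrix.vecHead, Matrix.vecTail],
          ?_⟩
        have := abs_of_neg (lt_of_not_ge hd)
        simp only [Matrix.cons_val_zero, Matrix.cons_val_one, Matrix.head_cons]
        linarith
    · have h2 : |d 0| ≤ |d 2| ∧ |d 1| ≤ |d 2| := by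
        push_neg at h0 h1
        rcases le_total (|d 1|) (|d 0|) with h | h
        · have := h0 h
          exact ⟨le_of_lt this, le_trans h (le_of_lt this)⟩
        · have := h1 h
          exact ⟨le_trans h (le_of_lt this), le_of_lt this⟩
      obtain ⟨hA, hB⟩ := h2
      by_cases hd : 0 ≤ d 2
      · refine ⟨!![(0:ℝ),0,-1;-1,0,0;0,1,0], !![0,0,1;1,0,0;0,1,0], ![-(d 2), -(d 0), d 1],
          ⟨cycB, ![-1,1,-1], by intro j; fin_cases j <;> norm_num,
            by ext i j; fin_cases i <;> fin_cases j <;>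
              simp [cycB, Matrix.vecHead, Matrix.vecTail]⟩,
          ⟨cycB, ![1,1,1], by intro j; fin_cases j <;> norm_num,
            by ext i j; fin_cases i <;> fin_cases j <;>
              simp [cycB, Matrix.vecHead, Matrix.vecTail]⟩,
          by simp [Matrix.det_fin_three],
          by simp [Matrix.det_fin_three],
          by ext i j; fin_cases i <;> fin_cases j <;>
            simp [Matrix.mul_apply, Matrix.vecMul, dotProduct, Fin.sum_univ_three,
              Matrix.diagonal_apply, Matrix.transpose_apply, Matrix.vecHead, Matrix.vecTail],
          ?_⟩
        have := abs_of_nonneg hd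
        simp only [Matrix.cons_val_zero, Matrix.cons_val_one, Matrix.head_cons]
        rw [abs_neg]
        linarith
      · refine ⟨!![(0:ℝ),0,1;1,0,0;0,1,0], !![0,0,1;1,0,0;0,1,0], ![d 2, d 0, d 1],
          ⟨cycB, ![1,1,1], by intro j; fin_cases j <;> norm_num,
            by ext i j; fin_cases i <;> fin_cases j <;>
              simp [cycB, Matrix.vecHead, Matrix.vecTail]⟩,
          ⟨cycB, ![1,1,1], by intro j; fin_cases j <;> norm_num,
            by ext i j; fin_cases i <;> fin_cases j <;>
              simp [cycB, Matrix.vecHead, Matrix.vecTail]⟩,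
          by simp [Matrix.det_fin_three],
          by simp [Matrix.det_fin_three],
          by ext i j; fin_cases i <;> fin_cases j <;>
            simp [Matrix.mul_apply, Matrix.vecMul, dotProduct, Fin.sum_univ_three,
              Matrix.diagonal_apply, Matrix.transpose_apply, Matrix.vecHead, Matrix.vecTail],
          ?_⟩
        have := abs_of_neg (lt_of_not_ge hd)
        simp only [Matrix.cons_val_zero, Matrix.cons_val_one, Matrix.head_cons]
        linarith
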